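/- Under the Case 2 configuration of the path-in-square setting, if additionally ab, bc, cd, de, ac, ce are edges of G, bd is not an edge of G, v2', v5' are distinct vertices of D with v2'v2, v5'v5, v2'b, v5'd edges of G, then v2'a and v5'e are edges of G. -/

import Mathlib

/-- The square of a graph `G`: two distinct vertices are adjacent in `G²` iff
their distance in `G` is 1 or 2. -/
def SimpleGraph.square {V : Type*} (G : SimpleGraph V) : SimpleGraph V where
  Adj u v := u ≠ v ∧ G.edist u v ≤ 2
  symm := ⟨fun u v h => by obtain ⟨h, hd⟩ := h; exact ⟨h.symm, by rwa [SimpleGraph.edist_comm]⟩⟩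
  loopless := ⟨fun u h => by obtain ⟨h, _⟩ := h; exact h rfl⟩

/-- `D` is an efficient dominating set of `G`: `D` is an independent set and
every vertex outside `D` has exactly one neighbor in `D`. -/
def SimpleGraph.IsEfficientDominatingSet {V : Type*} (G : SimpleGraph V) (D : Set V) : Prop :=
  (∀ u ∈ D, ∀ v ∈ D, ¬ G.Adj u v) ∧ ∀ v ∉ D, ∃! u, u ∈ D ∧ G.Adj v u

/-- The banner: a chordless 4-cycle 0-1-2-3-0 together with the vertex 4
adjacent to exactly one vertex (namely 0) of the cycle. -/
def banner : SimpleGraph (Fin 5) :=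
  SimpleGraph.fromEdgeSet {s(0, 1), s(1, 2), s(2, 3), s(3, 0), s(0, 4)}

/-- `G` is `H`-free: no induced subgraph of `G` is isomorphic to `H`. -/
def IsInducedFree {W V : Type*} (H : SimpleGraph W) (G : SimpleGraph V) : Prop :=
  IsEmpty (H ↪g G)

section Helpers

variable {V : Type*} {G : SimpleGraph V}

private lemma far_not_adj {x y : V} (h : 3 ≤ G.edist x y) : ¬ G.Adj x y := fun ha => by
  rw [← SimpleGraph.edist_eq_one_iff_adj] at ha
  rw [ha] at h
  exact absurd h (by norm_num)

private lemma far_ne {x y : V} (h : 3 ≤ G.edist x y) : x ≠ y := fun he => by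
  rw [he, SimpleGraph.edist_self] at h
  exact absurd h (by norm_num)

private lemma far_common {x y z : V} (h : 3 ≤ G.edist x y) (h1 : G.Adj x z) (h2 : G.Adj z y) :
    False := by
  have e1 : G.edist x z = 1 := SimpleGraph.edist_eq_one_iff_adj.mpr h1
  have e2 : G.edist z y = 1 := SimpleGraph.edist_eq_one_iff_adj.mpr h2
  have t := G.edist_triangle (u := x) (v := z) (w := y)
  rw [e1, e2] at t
  exact absurd (h.trans t) (by norm_num)

private lemma two_not_adj {x y : V} (h : G.edist x y = 2) : ¬ G.Adj x y := fun ha => by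
  rw [← SimpleGraph.edist_eq_one_iff_adj] at ha
  rw [ha] at h
  exact absurd h (by norm_num)

private lemma two_ne {x y : V} (h : G.edist x y = 2) : x ≠ y := fun he => by
  rw [he, SimpleGraph.edist_self] at h
  exact absurd h (by norm_num)

private lemma nsymm {x y : V} (h : ¬ G.Adj x y) : ¬ G.Adj y x := fun ha => h ha.symm

private lemma neOf {x y z : V} (ha : G.Adj z x) (hn : ¬ G.Adj z y) : x ≠ y :=
  fun h => hn (h ▸ ha)

private lemma memND {D : Set V} {x y : V} (hx : x ∈ D) (hy : y ∉ D) : x ≠ y :=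
  fun h => hy (h ▸ hx)

private lemma neDmem {D : Set V} {x y : V} (hy : y ∈ D) (hx : x ∉ D) : x ≠ y :=
  fun h => hx (h.symm ▸ hy)

set_option maxHeartbeats 2000000 in
private lemma no_banner (hB : IsInducedFree banner G) (x0 x1 x2 x3 x4 : V)
    (a01 : G.Adj x0 x1) (a12 : G.Adj x1 x2) (a23 : G.Adj x2 x3) (a30 : G.Adj x3 x0)
    (a04 : G.Adj x0 x4)
    (n02 : ¬G.Adj x0 x2) (n13 : ¬G.Adj x1 x3) (n14 : ¬G.Adj x1 x4) (n24 : ¬G.Adj x2 x4)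
    (n34 : ¬G.Adj x3 x4)
    (d02 : x0 ≠ x2) (d13 : x1 ≠ x3) (d14 : x1 ≠ x4) (d24 : x2 ≠ x4) (d34 : x3 ≠ x4) : False := by
  have b01 : banner.Adj 0 1 := by simp [banner, Sym2.eq_iff]
  have b12 : banner.Adj 1 2 := by simp [banner, Sym2.eq_iff]
  have b23 : banner.Adj 2 3 := by simp [banner, Sym2.eq_iff]
  have b30 : banner.Adj 3 0 := by simp [banner, Sym2.eq_iff]
  have b04 : banner.Adj 0 4 := by simp [banner, Sym2.eq_iff]
  have c02 : ¬ banner.Adj 0 2 := by simp [banner, Sym2.eq_iff]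
  have c13 : ¬ banner.Adj 1 3 := by simp [banner, Sym2.eq_iff]
  have c14 : ¬ banner.Adj 1 4 := by simp [banner, Sym2.eq_iff]
  have c24 : ¬ banner.Adj 2 4 := by simp [banner, Sym2.eq_iff]
  have c34 : ¬ banner.Adj 3 4 := by simp [banner, Sym2.eq_iff]
  apply hB.false
  refine ⟨⟨![x0, x1, x2, x3, x4], ?_⟩, ?_⟩
  · intro i j h
    fin_cases i <;> fin_cases j <;>
      first
        | rfl
        | exact absurd h a01.ne | exact absurd h.symm a01.ne
        | exact absurd h a12.ne | exact absurd h.symm a12.ne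
        | exact absurd h a23.ne | exact absurd h.symm a23.ne
        | exact absurd h.symm a30.ne | exact absurd h a30.ne
        | exact absurd h a04.ne | exact absurd h.symm a04.ne
        | exact absurd h d02 | exact absurd h.symm d02
        | exact absurd h d13 | exact absurd h.symm d13
        | exact absurd h d14 | exact absurd h.symm d14
        | exact absurd h d24 | exact absurd h.symm d24
        | exact absurd h d34 | exact absurd h.symm d34
  · intro i j
    fin_cases i <;> fin_cases j <;>
      first
        | exact iff_of_false G.irrefl banner.irrefl
        | exact iff_of_true a01 b01 | exact iff_of_true a01.symm b01.symm
        | exact iff_of_true a12 b12 | exact iff_of_true a12.symm b12.symm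
        | exact iff_of_true a23 b23 | exact iff_of_true a23.symm b23.symm
        | exact iff_of_true a30 b30 | exact iff_of_true a30.symm b30.symm
        | exact iff_of_true a04 b04 | exact iff_of_true a04.symm b04.symm
        | exact iff_of_false n02 c02 | exact iff_of_false (nsymm n02) (nsymm c02)
        | exact iff_of_false n13 c13 | exact iff_of_false (nsymm n13) (nsymm c13)
        | exact iff_of_false n14 c14 | exact iff_of_false (nsymm n14) (nsymm c14)
        | exact iff_of_false n24 c24 | exact iff_of_false (nsymm n24) (nsymm c24)
        | exact iff_of_false n34 c34 | exact iff_of_false (nsymm n34) (nsymm c34)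

set_option maxHeartbeats 2000000 in
private lemma no_p6 (hP : IsInducedFree (SimpleGraph.pathGraph 6) G) (x0 x1 x2 x3 x4 x5 : V)
    (a01 : G.Adj x0 x1) (a12 : G.Adj x1 x2) (a23 : G.Adj x2 x3) (a34 : G.Adj x3 x4)
    (a45 : G.Adj x4 x5)
    (n02 : ¬G.Adj x0 x2) (n03 : ¬G.Adj x0 x3) (n04 : ¬G.Adj x0 x4) (n05 : ¬G.Adj x0 x5)
    (n13 : ¬G.Adj x1 x3) (n14 : ¬G.Adj x1 x4) (n15 : ¬G.Adj x1 x5)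
    (n24 : ¬G.Adj x2 x4) (n25 : ¬G.Adj x2 x5) (n35 : ¬G.Adj x3 x5)
    (d02 : x0 ≠ x2) (d03 : x0 ≠ x3) (d04 : x0 ≠ x4) (d05 : x0 ≠ x5)
    (d13 : x1 ≠ x3) (d14 : x1 ≠ x4) (d15 : x1 ≠ x5)
    (d24 : x2 ≠ x4) (d25 : x2 ≠ x5) (d35 : x3 ≠ x5) : False := by
  have P : ∀ (i j : Fin 6), i.val + 1 = j.val → (SimpleGraph.pathGraph 6).Adj i j :=
    fun i j h => SimpleGraph.pathGraph_adj.mpr (Or.inl h)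
  have p01 := P 0 1 rfl
  have p12 := P 1 2 rfl
  have p23 := P 2 3 rfl
  have p34 := P 3 4 rfl
  have p45 := P 4 5 rfl
  have q02 : ¬ (SimpleGraph.pathGraph 6).Adj 0 2 := by rw [SimpleGraph.pathGraph_adj]; decide
  have q03 : ¬ (SimpleGraph.pathGraph 6).Adj 0 3 := by rw [SimpleGraph.pathGraph_adj]; decide
  have q04 : ¬ (SimpleGraph.pathGraph 6).Adj 0 4 := by rw [SimpleGraph.pathGraph_adj]; decide
  have q05 : ¬ (SimpleGraph.pathGraph 6).Adj 0 5 := by rw [SimpleGraph.pathGraph_adj]; decide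
  have q13 : ¬ (SimpleGraph.pathGraph 6).Adj 1 3 := by rw [SimpleGraph.pathGraph_adj]; decide
  have q14 : ¬ (SimpleGraph.pathGraph 6).Adj 1 4 := by rw [SimpleGraph.pathGraph_adj]; decide
  have q15 : ¬ (SimpleGraph.pathGraph 6).Adj 1 5 := by rw [SimpleGraph.pathGraph_adj]; decide
  have q24 : ¬ (SimpleGraph.pathGraph 6).Adj 2 4 := by rw [SimpleGraph.pathGraph_adj]; decide
  have q25 : ¬ (SimpleGraph.pathGraph 6).Adj 2 5 := by rw [SimpleGraph.pathGraph_adj]; decide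
  have q35 : ¬ (SimpleGraph.pathGraph 6).Adj 3 5 := by rw [SimpleGraph.pathGraph_adj]; decide
  apply hP.false
  refine ⟨⟨![x0, x1, x2, x3, x4, x5], ?_⟩, ?_⟩
  · intro i j h
    fin_cases i <;> fin_cases j <;>
      first
        | rfl
        | exact absurd h a01.ne | exact absurd h.symm a01.ne
        | exact absurd h a12.ne | exact absurd h.symm a12.ne
        | exact absurd h a23.ne | exact absurd h.symm a23.ne
        | exact absurd h a34.ne | exact absurd h.symm a34.ne
        | exact absurd h a45.ne | exact absurd h.symm a45.ne
        | exact absurd h d02 | exact absurd h.symm d02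
        | exact absurd h d03 | exact absurd h.symm d03
        | exact absurd h d04 | exact absurd h.symm d04
        | exact absurd h d05 | exact absurd h.symm d05
        | exact absurd h d13 | exact absurd h.symm d13
        | exact absurd h d14 | exact absurd h.symm d14
        | exact absurd h d15 | exact absurd h.symm d15
        | exact absurd h d24 | exact absurd h.symm d24
        | exact absurd h d25 | exact absurd h.symm d25
        | exact absurd h d35 | exact absurd h.symm d35
  · intro i j
    fin_cases i <;> fin_cases j <;>
      first
        | exact iff_of_false G.irrefl (SimpleGraph.pathGraph 6).irrefl
        | exact iff_of_true a01 p01 | exact iff_of_true a01.symm p01.symm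
        | exact iff_of_true a12 p12 | exact iff_of_true a12.symm p12.symm
        | exact iff_of_true a23 p23 | exact iff_of_true a23.symm p23.symm
        | exact iff_of_true a34 p34 | exact iff_of_true a34.symm p34.symm
        | exact iff_of_true a45 p45 | exact iff_of_true a45.symm p45.symm
        | exact iff_of_false n02 q02 | exact iff_of_false (nsymm n02) (nsymm q02)
        | exact iff_of_false n03 q03 | exact iff_of_false (nsymm n03) (nsymm q03)
        | exact iff_of_false n04 q04 | exact iff_of_false (nsymm n04) (nsymm q04)
        | exact iff_of_false n05 q05 | exact iff_of_false (nsymm n05) (nsymm q05)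
        | exact iff_of_false n13 q13 | exact iff_of_false (nsymm n13) (nsymm q13)
        | exact iff_of_false n14 q14 | exact iff_of_false (nsymm n14) (nsymm q14)
        | exact iff_of_false n15 q15 | exact iff_of_false (nsymm n15) (nsymm q15)
        | exact iff_of_false n24 q24 | exact iff_of_false (nsymm n24) (nsymm q24)
        | exact iff_of_false n25 q25 | exact iff_of_false (nsymm n25) (nsymm q25)
        | exact iff_of_false n35 q35 | exact iff_of_false (nsymm n35) (nsymm q35)

end Helpers

section Key

variable {V : Type*}

private lemma key (G : SimpleGraph V)
    (hP6 : IsInducedFree (SimpleGraph.pathGraph 6) G)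
    (hBanner : IsInducedFree banner G)
    (D : Set V) (hD : G.IsEfficientDominatingSet D)
    (v1 v2 v3 v4 v5 v6 : V)
    (h13 : 3 ≤ G.edist v1 v3) (h14 : 3 ≤ G.edist v1 v4) (h15 : 3 ≤ G.edist v1 v5)
    (h16 : 3 ≤ G.edist v1 v6) (h24 : 3 ≤ G.edist v2 v4) (h25 : 3 ≤ G.edist v2 v5)
    (h26 : 3 ≤ G.edist v2 v6) (h35 : 3 ≤ G.edist v3 v5) (h36 : 3 ≤ G.edist v3 v6)
    (h46 : 3 ≤ G.edist v4 v6)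
    (hdist12 : G.edist v1 v2 = 2) (hdist56 : G.edist v5 v6 = 2)
    (a e b d c : V)
    (hav1 : G.Adj a v1) (hav2 : G.Adj a v2) (hev5 : G.Adj e v5) (hev6 : G.Adj e v6)
    (hbv2 : G.Adj b v2) (hbv3 : G.Adj b v3) (hdv4 : G.Adj d v4) (hdv5 : G.Adj d v5)
    (hcv3 : G.Adj c v3) (hcv4 : G.Adj c v4)
    (hab : G.Adj a b) (hbc : G.Adj b c) (hcd : G.Adj c d) (hde : G.Adj d e)
    (hac : G.Adj a c) (hce : G.Adj c e) (hbd : ¬ G.Adj b d)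
    (v2' v5' : V) (hne : v2' ≠ v5') (hv2'D : v2' ∈ D) (hv5'D : v5' ∈ D)
    (hv2'v2 : G.Adj v2' v2) (hv5'v5 : G.Adj v5' v5)
    (hv2'b : G.Adj v2' b) (hv5'd : G.Adj v5' d)
    : G.Adj v2' a := by
  by_contra hass
  obtain ⟨indep, uniq⟩ := hD
  -- D-membership facts
  have nbD : b ∉ D := fun h => indep v2' hv2'D b h hv2'b
  have nv2D : v2 ∉ D := fun h => indep v2' hv2'D v2 h hv2'v2
  have ndD : d ∉ D := fun h => indep v5' hv5'D d h hv5'd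
  have nv5D : v5 ∉ D := fun h => indep v5' hv5'D v5 h hv5'v5
  have domuniq : ∀ {x w1 w2 : V}, x ∉ D → w1 ∈ D → w2 ∈ D →
      G.Adj x w1 → G.Adj x w2 → w1 = w2 := by
    intro x w1 w2 hx hw1 hw2 a1 a2
    obtain ⟨u, -, hu⟩ := uniq x hx
    rw [hu w1 ⟨hw1, a1⟩, hu w2 ⟨hw2, a2⟩]
  have dom_v2 : ∀ w, w ∈ D → G.Adj v2 w → w = v2' :=
    fun w hw h => domuniq nv2D hw hv2'D h hv2'v2.symm
  have dom_b : ∀ w, w ∈ D → G.Adj b w → w = v2' :=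
    fun w hw h => domuniq nbD hw hv2'D h hv2'b.symm
  have dom_d : ∀ w, w ∈ D → G.Adj d w → w = v5' :=
    fun w hw h => domuniq ndD hw hv5'D h hv5'd.symm
  have dom_v5 : ∀ w, w ∈ D → G.Adj v5 w → w = v5' :=
    fun w hw h => domuniq nv5D hw hv5'D h hv5'v5.symm
  have nv2'd : ¬ G.Adj v2' d := fun h => hne (dom_d v2' hv2'D h.symm)
  have nv5'b : ¬ G.Adj v5' b := fun h => hne (dom_b v5' hv5'D h.symm).symm
  have nv2'q : ¬ G.Adj v2' v5' := indep v2' hv2'D v5' hv5'D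
  -- distance-based non-edges
  have n12 : ¬ G.Adj v1 v2 := two_not_adj hdist12
  have n56 : ¬ G.Adj v5 v6 := two_not_adj hdist56
  have n13 : ¬ G.Adj v1 v3 := far_not_adj h13
  have n14 : ¬ G.Adj v1 v4 := far_not_adj h14
  have n15 : ¬ G.Adj v1 v5 := far_not_adj h15
  have n16 : ¬ G.Adj v1 v6 := far_not_adj h16
  have n24 : ¬ G.Adj v2 v4 := far_not_adj h24
  have n25 : ¬ G.Adj v2 v5 := far_not_adj h25
  have n26 : ¬ G.Adj v2 v6 := far_not_adj h26
  have n35 : ¬ G.Adj v3 v5 := far_not_adj h35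
  have n36 : ¬ G.Adj v3 v6 := far_not_adj h36
  have n46 : ¬ G.Adj v4 v6 := far_not_adj h46
  have na3 : ¬ G.Adj a v3 := fun h => far_common h13 hav1.symm h
  have na4 : ¬ G.Adj a v4 := fun h => far_common h14 hav1.symm h
  have na5 : ¬ G.Adj a v5 := fun h => far_common h15 hav1.symm h
  have na6 : ¬ G.Adj a v6 := fun h => far_common h16 hav1.symm h
  have nv2'4 : ¬ G.Adj v2' v4 := fun h => far_common h24 hv2'v2.symm h
  have nv2'5 : ¬ G.Adj v2' v5 := fun h => far_common h25 hv2'v2.symm h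
  have nv2'6 : ¬ G.Adj v2' v6 := fun h => far_common h26 hv2'v2.symm h
  have nv5'1 : ¬ G.Adj v5' v1 := fun h => far_common h15 h.symm hv5'v5
  have nv5'2 : ¬ G.Adj v5' v2 := fun h => far_common h25 h.symm hv5'v5
  have nv5'3 : ¬ G.Adj v5' v3 := fun h => far_common h35 h.symm hv5'v5
  have nv2c : ¬ G.Adj v2 c := fun h => far_common h24 h hcv4
  have nv2d : ¬ G.Adj v2 d := fun h => far_common h24 h hdv4
  have nv2e : ¬ G.Adj v2 e := fun h => far_common h25 h hev5
  have nv1b : ¬ G.Adj v1 b := fun h => far_common h13 h hbv3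
  have nv1c : ¬ G.Adj v1 c := fun h => far_common h13 h hcv3
  have nv1d : ¬ G.Adj v1 d := fun h => far_common h14 h hdv4
  have nv1e : ¬ G.Adj v1 e := fun h => far_common h15 h hev5
  have nv3d : ¬ G.Adj v3 d := fun h => far_common h35 h hdv5
  have nv3e : ¬ G.Adj v3 e := fun h => far_common h35 h hev5
  have nbv4 : ¬ G.Adj b v4 := fun h => far_common h24 hbv2.symm h
  have nbv5 : ¬ G.Adj b v5 := fun h => far_common h25 hbv2.symm h
  have nbv6 : ¬ G.Adj b v6 := fun h => far_common h26 hbv2.symm h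
  have ncv5 : ¬ G.Adj c v5 := fun h => far_common h35 hcv3.symm h
  have ncv6 : ¬ G.Adj c v6 := fun h => far_common h36 hcv3.symm h
  have ndv6 : ¬ G.Adj d v6 := fun h => far_common h46 hdv4.symm h
  have nv4e : ¬ G.Adj v4 e := fun h => far_common h46 h hev6
  have hcnev2 : c ≠ v2 := neOf hcv4.symm (nsymm n24)
  rcases eq_or_ne a v2' with heq | hnea
  · -- Case a = v2' (so a ∈ D)
    have haD : a ∈ D := by rw [heq]; exact hv2'D
    have dom_v2a : ∀ w, w ∈ D → G.Adj v2 w → w = a :=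
      fun w hw h => (dom_v2 w hw h).trans heq.symm
    have dom_ba : ∀ w, w ∈ D → G.Adj b w → w = a :=
      fun w hw h => (dom_b w hw h).trans heq.symm
    have nad : ¬ G.Adj a d := by rw [heq]; exact nv2'd
    have naq : ¬ G.Adj a v5' := by rw [heq]; exact nv2'q
    have hane5' : a ≠ v5' := by rw [heq]; exact hne
    have nv1D : v1 ∉ D := fun h => indep a haD v1 h hav1
    have ncD : c ∉ D := fun h => indep a haD c h hac
    have dom_v1 : ∀ w, w ∈ D → G.Adj v1 w → w = a :=
      fun w hw h => domuniq nv1D hw haD h hav1.symm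
    have dom_c : ∀ w, w ∈ D → G.Adj c w → w = a :=
      fun w hw h => domuniq ncD hw haD h hac.symm
    have heD : e ∉ D := fun h => hane5' ((dom_c e h hce).symm.trans (dom_d e h hde))
    have hv3nea : v3 ≠ a := (neOf hav1.symm n13).symm
    have hv3D : v3 ∉ D := fun h => hv3nea (dom_ba v3 h hbv3)
    have ncv5' : ¬ G.Adj c v5' := fun h => hane5' (dom_c v5' hv5'D h).symm
    have nv2v3 : ¬ G.Adj v2 v3 := by
      intro h
      exact no_banner hBanner c v3 v2 a d hcv3 h.symm hav2.symm hac hcd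
        (nsymm nv2c) (nsymm na3) nv3d nv2d nad
        hcnev2 hv3nea (neOf hbv3 hbd) (neOf hav2 nad) (neOf hav2.symm nv2d)
    have nv3v4 : ¬ G.Adj v3 v4 := by
      intro h
      exact no_p6 hP6 v1 a b v3 v4 d hav1.symm hab hbv3 h hdv4.symm
        nv1b n13 n14 nv1d na3 na4 nad nbv4 hbd nv3d
        (neOf hbv2.symm (nsymm n12)).symm (far_ne h13) (far_ne h14) (neOf hav1 nad)
        hv3nea.symm (neOf hav1.symm n14) (neOf hav2.symm nv2d)
        (neOf hbv2.symm n24) (neOf hbv2.symm nv2d) (neOf hbv3 hbd)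
    have nv6q : ¬ G.Adj v6 v5' := by
      intro h
      exact no_p6 hP6 v2 b c d v5' v6 hbv2.symm hbc hcd hv5'd.symm h.symm
        nv2c nv2d (nsymm nv5'2) n26 hbd (nsymm nv5'b) nbv6 ncv5' ncv6 ndv6
        hcnev2.symm (neOf hav2 nad) (neDmem hv5'D nv2D) (far_ne h26)
        (neOf hbv2.symm nv2d) (neDmem hv5'D nbD) (neOf hbv3.symm n36)
        (neDmem hv5'D ncD) (neOf hcv3.symm n36) (neOf hdv5.symm n56)
    obtain ⟨w, ⟨hwD, hw3⟩, -⟩ := uniq v3 hv3D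
    have wna : w ≠ a := neOf hw3 (nsymm na3)
    have wnq : w ≠ v5' := neOf hw3 (nsymm nv5'3)
    have nwa : ¬ G.Adj w a := indep w hwD a haD
    have nwq : ¬ G.Adj w v5' := indep w hwD v5' hv5'D
    have nbw : ¬ G.Adj b w := fun h => wna (dom_ba w hwD h)
    have nv2w : ¬ G.Adj v2 w := fun h => wna (dom_v2a w hwD h)
    have ndw : ¬ G.Adj d w := fun h => wnq (dom_d w hwD h)
    have nv5w : ¬ G.Adj v5 w := fun h => wnq (dom_v5 w hwD h)
    have nv1w : ¬ G.Adj v1 w := fun h => wna (dom_v1 w hwD h)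
    have ncw : ¬ G.Adj c w := fun h => wna (dom_c w hwD h)
    have new : ¬ G.Adj e w := by
      intro h
      exact no_banner hBanner e w v3 c v5 h hw3.symm hcv3.symm hce hev5
        (nsymm nv3e) (nsymm ncw) (nsymm nv5w) n35 ncv5
        (neOf hev5.symm (nsymm n35)) (memND hwD ncD) (memND hwD nv5D)
        (far_ne h35) (neOf hcv3.symm n35)
    have nv4w : ¬ G.Adj v4 w := by
      intro h
      exact no_banner hBanner c v3 w v4 e hcv3 hw3 h.symm hcv4.symm hce
        ncw nv3v4 nv3e (nsymm new) nv4e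
        (neDmem hwD ncD) (neOf hdv4 (nsymm nv3d)).symm
        (neOf hev5.symm (nsymm n35)).symm (neOf hw3 nv3e)
        (neOf hev6.symm (nsymm n46)).symm
    have nv6w : ¬ G.Adj v6 w := by
      intro h
      exact no_p6 hP6 v4 d e v6 w v3 hdv4.symm hde hev6 h hw3.symm
        nv4e n46 nv4w (nsymm nv3v4) ndv6 ndw (nsymm nv3d) new (nsymm nv3e) (nsymm n36)
        (neOf hev6.symm (nsymm n46)).symm (far_ne h46) (neOf hcv4 ncw)
        (neOf hdv4 (nsymm nv3d)) (neOf hdv5.symm n56) (neDmem hwD ndD)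
        (neOf hdv5.symm (nsymm n35)) (neOf hw3 nv3e).symm
        (neOf hev5.symm (nsymm n35)) (far_ne h36).symm
    have nbe : ¬ G.Adj b e := by
      intro h
      exact no_p6 hP6 w v3 b e d v4 hw3.symm hbv3.symm h hde.symm hdv4
        (nsymm nbw) (nsymm new) (nsymm ndw) (nsymm nv4w) nv3e nv3d nv3v4 hbd nbv4 (nsymm nv4e)
        (memND hwD nbD) (memND hwD heD) (memND hwD ndD) (neOf hcv4 ncw).symm
        (neOf hev5.symm (nsymm n35)).symm (neOf hbv3 hbd) (neOf hdv4 (nsymm nv3d)).symm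
        (neOf hbv2.symm nv2d) (neOf hbv2.symm n24) (neOf hev6.symm (nsymm n46))
    have nae : ¬ G.Adj a e := by
      intro h
      exact no_p6 hP6 w v3 b a e v6 hw3.symm hbv3.symm hab.symm h hev6
        (nsymm nbw) nwa (nsymm new) (nsymm nv6w) (nsymm na3) nv3e n36 nbe nbv6 na6
        (memND hwD nbD) wna (memND hwD heD) (neOf hw3 n36)
        hv3nea (neOf hev5.symm (nsymm n35)).symm (far_ne h36)
        (neOf hbv2.symm nv2e) (neOf hbv3.symm n36) (neOf hav1.symm n16)
    have eq5 : G.Adj e v5' := by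
      by_contra hq
      exact no_p6 hP6 v5' v5 e c a v2 hv5'v5 hev5.symm hce.symm hac.symm hav2
        (nsymm hq) (nsymm ncv5') (nsymm naq) nv5'2 (nsymm ncv5) (nsymm na5)
        (nsymm n25) (nsymm nae) (nsymm nv2e) (nsymm nv2c)
        (memND hv5'D heD) (memND hv5'D ncD) hane5'.symm (memND hv5'D nv2D)
        (neOf hcv3.symm n35).symm (neOf hav1.symm n15).symm (far_ne h25).symm
        (neOf hev6.symm (nsymm na6)) (neOf hev5.symm (nsymm n25)) hcnev2
    have dom_e : ∀ w', w' ∈ D → G.Adj e w' → w' = v5' :=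
      fun w' hw' h' => domuniq heD hw' hv5'D h' eq5
    have hv6ne5' : v6 ≠ v5' := (neOf hv5'v5.symm n56).symm
    have hv6D : v6 ∉ D := fun h => hv6ne5' (dom_e v6 h hev6)
    obtain ⟨u, ⟨huD, hu6⟩, -⟩ := uniq v6 hv6D
    have una : u ≠ a := neOf hu6 (nsymm na6)
    have unq : u ≠ v5' := neOf hu6 nv6q
    have nue : ¬ G.Adj e u := fun h => unq (dom_e u huD h)
    have nuc : ¬ G.Adj c u := fun h => una (dom_c u huD h)
    have nub : ¬ G.Adj b u := fun h => una (dom_ba u huD h)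
    have nuv2 : ¬ G.Adj v2 u := fun h => una (dom_v2a u huD h)
    exact no_p6 hP6 u v6 e c b v2 hu6.symm hev6.symm hce.symm hbc.symm hbv2
      (nsymm nue) (nsymm nuc) (nsymm nub) (nsymm nuv2) (nsymm ncv6) (nsymm nbv6)
      (nsymm n26) (nsymm nbe) (nsymm nv2e) (nsymm nv2c)
      (memND huD heD) (memND huD ncD) (memND huD nbD) (memND huD nv2D)
      (neOf hcv3.symm n36).symm (neOf hbv3.symm n36).symm (far_ne h26).symm
      (neOf hev5.symm (nsymm nbv5)) (neOf hev5.symm (nsymm n25)) hcnev2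
  · -- Case a ≠ v2'
    have haD : a ∉ D := fun h => hnea (dom_v2 a h hav2.symm)
    have nv2v3 : ¬ G.Adj v2 v3 := by
      intro h
      exact no_banner hBanner a v2 v3 c v1 hav2 h hcv3.symm hac.symm hav1
        na3 nv2c (nsymm n12) (nsymm n13) (nsymm nv1c)
        (neOf hav1.symm n13) hcnev2.symm (two_ne hdist12).symm (far_ne h13).symm
        (neOf hcv3.symm (nsymm n13))
    have ncp : ¬ G.Adj c v2' := by
      intro h
      exact no_banner hBanner c a v2 v2' v4 hac.symm hav2 hv2'v2.symm h.symm hcv4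
        (nsymm nv2c) (fun hh => hass hh.symm) na4 n24 nv2'4
        hcnev2 hnea (neOf hav1.symm n14) (far_ne h24) (neOf hv2'v2.symm n24)
    have ead : G.Adj a d := by
      by_contra hnad
      exact no_p6 hP6 v2' v2 a c d v5 hv2'v2 hav2.symm hac hcd hdv5
        hass (nsymm ncp) nv2'd nv2'5 nv2c nv2d n25 hnad na5 ncv5
        hnea.symm (neOf hv2'v2.symm nv2c) (memND hv2'D ndD) (memND hv2'D nv5D)
        hcnev2.symm (neOf hv2'v2 nv2'd) (far_ne h25)
        (neOf hav2.symm nv2d) (neOf hav1.symm n15) (neOf hcv3.symm n35)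
    have nv3p : ¬ G.Adj v3 v2' := by
      intro h
      exact no_p6 hP6 v3 v2' v2 a d v5 h hv2'v2 hav2.symm ead hdv5
        (nsymm nv2v3) (nsymm na3) nv3d n35 hass nv2'd nv2'5 nv2d n25 na5
        (neOf hcv3 (nsymm nv2c)) (neOf hav1.symm n13).symm (neOf hbv3 hbd)
        (far_ne h35) hnea.symm (memND hv2'D ndD) (memND hv2'D nv5D)
        (neOf hv2'v2 nv2'd) (far_ne h25) (neOf hav1.symm n15)
    have hv3D : v3 ∉ D := fun h => ncp ((dom_b v3 h hbv3) ▸ hcv3)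
    obtain ⟨w, ⟨hwD, hw3⟩, -⟩ := uniq v3 hv3D
    have wnp : w ≠ v2' := fun h => nv3p (h ▸ hw3)
    have wnq : w ≠ v5' := neOf hw3 (nsymm nv5'3)
    have nbw : ¬ G.Adj b w := fun h => wnp (dom_b w hwD h)
    have ndw : ¬ G.Adj d w := fun h => wnq (dom_d w hwD h)
    have nv5w : ¬ G.Adj v5 w := fun h => wnq (dom_v5 w hwD h)
    have nwp : ¬ G.Adj w v2' := indep w hwD v2' hv2'D
    have eaw : G.Adj a w := by
      by_contra hnaw
      exact no_p6 hP6 w v3 b a d v5 hw3.symm hbv3.symm hab.symm ead hdv5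
        (nsymm nbw) (nsymm hnaw) (nsymm ndw) (nsymm nv5w) (nsymm na3) nv3d n35 hbd nbv5 na5
        (memND hwD nbD) (memND hwD haD) (memND hwD ndD) (memND hwD nv5D)
        (neOf hav1.symm n13).symm (neOf hbv3 hbd) (far_ne h35)
        (neOf hbv2.symm nv2d) (neOf hbv2.symm n25) (neOf hav1.symm n15)
    exact no_banner hBanner b a w v3 v2' hab.symm eaw hw3.symm hbv3.symm hv2'b.symm
      nbw na3 (fun hh => hass hh.symm) nwp nv3p
      (neDmem hwD nbD) (neOf hav1.symm n13) hnea
      (fun h => hass (h ▸ eaw).symm) (neOf hcv3 ncp)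

end Key

theorem path_case21_v2pa_v5pe {V : Type*} [Fintype V] (G : SimpleGraph V)
    (hP6 : IsInducedFree (SimpleGraph.pathGraph 6) G)
    (hBanner : IsInducedFree banner G)
    (D : Set V) (hD : G.IsEfficientDominatingSet D)
    (v1 v2 v3 v4 v5 v6 : V)
    (h12 : G.edist v1 v2 ≤ 2) (h23 : G.edist v2 v3 ≤ 2) (h34 : G.edist v3 v4 ≤ 2)
    (h45 : G.edist v4 v5 ≤ 2) (h56 : G.edist v5 v6 ≤ 2)
    (h13 : 3 ≤ G.edist v1 v3) (h14 : 3 ≤ G.edist v1 v4) (h15 : 3 ≤ G.edist v1 v5)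
    (h16 : 3 ≤ G.edist v1 v6) (h24 : 3 ≤ G.edist v2 v4) (h25 : 3 ≤ G.edist v2 v5)
    (h26 : 3 ≤ G.edist v2 v6) (h35 : 3 ≤ G.edist v3 v5) (h36 : 3 ≤ G.edist v3 v6)
    (h46 : 3 ≤ G.edist v4 v6)
    (hdist12 : G.edist v1 v2 = 2) (hdist56 : G.edist v5 v6 = 2)
    (a e b d c : V)
    (hav1 : G.Adj a v1) (hav2 : G.Adj a v2) (hev5 : G.Adj e v5) (hev6 : G.Adj e v6)
    (hbv2 : G.Adj b v2) (hbv3 : G.Adj b v3) (hdv4 : G.Adj d v4) (hdv5 : G.Adj d v5)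
    (hcv3 : G.Adj c v3) (hcv4 : G.Adj c v4)
    (hab : G.Adj a b) (hbc : G.Adj b c) (hcd : G.Adj c d) (hde : G.Adj d e)
    (hac : G.Adj a c) (hce : G.Adj c e) (hbd : ¬ G.Adj b d)
    (v2' v5' : V) (hne : v2' ≠ v5') (hv2'D : v2' ∈ D) (hv5'D : v5' ∈ D)
    (hv2'v2 : G.Adj v2' v2) (hv5'v5 : G.Adj v5' v5)
    (hv2'b : G.Adj v2' b) (hv5'd : G.Adj v5' d)
    : G.Adj v2' a ∧ G.Adj v5' e := by
  have g13 : 3 ≤ G.edist v6 v4 := by rw [SimpleGraph.edist_comm]; exact h46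
  have g14 : 3 ≤ G.edist v6 v3 := by rw [SimpleGraph.edist_comm]; exact h36
  have g15 : 3 ≤ G.edist v6 v2 := by rw [SimpleGraph.edist_comm]; exact h26
  have g16 : 3 ≤ G.edist v6 v1 := by rw [SimpleGraph.edist_comm]; exact h16
  have g24 : 3 ≤ G.edist v5 v3 := by rw [SimpleGraph.edist_comm]; exact h35
  have g25 : 3 ≤ G.edist v5 v2 := by rw [SimpleGraph.edist_comm]; exact h25
  have g26 : 3 ≤ G.edist v5 v1 := by rw [SimpleGraph.edist_comm]; exact h15
  have g35 : 3 ≤ G.edist v4 v2 := by rw [SimpleGraph.edist_comm]; exact h24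
  have g36 : 3 ≤ G.edist v4 v1 := by rw [SimpleGraph.edist_comm]; exact h14
  have g46 : 3 ≤ G.edist v3 v1 := by rw [SimpleGraph.edist_comm]; exact h13
  have gd12 : G.edist v6 v5 = 2 := by rw [SimpleGraph.edist_comm]; exact hdist56
  have gd56 : G.edist v2 v1 = 2 := by rw [SimpleGraph.edist_comm]; exact hdist12
  refine ⟨?_, ?_⟩
  · exact key G hP6 hBanner D hD v1 v2 v3 v4 v5 v6
      h13 h14 h15 h16 h24 h25 h26 h35 h36 h46 hdist12 hdist56
      a e b d c hav1 hav2 hev5 hev6 hbv2 hbv3 hdv4 hdv5 hcv3 hcv4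
      hab hbc hcd hde hac hce hbd
      v2' v5' hne hv2'D hv5'D hv2'v2 hv5'v5 hv2'b hv5'd
  · exact key G hP6 hBanner D hD v6 v5 v4 v3 v2 v1
      g13 g14 g15 g16 g24 g25 g26 g35 g36 g46 gd12 gd56
      e a d b c hev6 hev5 hav2 hav1 hdv5 hdv4 hbv3 hbv2 hcv4 hcv3
      hde.symm hcd.symm hbc.symm hab.symm hce.symm hac.symm (fun h => hbd h.symm)
      v5' v2' hne.symm hv5'D hv2'D hv5'v5 hv2'v2 hv5'd hv2'b
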